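/- Let (s_1,…,s_N) and (s'_1,…,s'_N) be Cuntz families of order N on complex Hilbert spaces H and H' respectively, let J be an infinite word with letters in {1,…,N}, and let Ω ∈ H and Ω' ∈ H' be UHF-cyclic unit vectors both satisfying the P[J]-condition (with respect to the respective families). Then there exists a unitary U : H → H' such that U Ω = Ω' and U (s_K s_L^*) = (s'_K (s'_L)^*) U for all finite words K, L with |K| = |L|. In particular, for each J the class P[J] contains only one unitary equivalence class. -/

import Mathlib

noncomputable section

def IsCuntzFamily {H : Type*} [NormedAddCommGroup H] [InnerProductSpace ℂ H]
    [CompleteSpace H] {N : ℕ} (s : Fin N → H →L[ℂ] H) : Prop :=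
  (∀ i j, star (s i) * s j = if i = j then (1 : H →L[ℂ] H) else 0) ∧
  ∑ i, s i * star (s i) = 1

def wordOp {H : Type*} [NormedAddCommGroup H] [InnerProductSpace ℂ H]
    [CompleteSpace H] {N : ℕ} (s : Fin N → H →L[ℂ] H) : List (Fin N) → H →L[ℂ] H
  | [] => 1
  | j :: J => s j * wordOp s J

/-- Closed linear span of `{s_K s_L^* v : |K| = |L|}`. -/
def UHFSpan {H : Type*} [NormedAddCommGroup H] [InnerProductSpace ℂ H]
    [CompleteSpace H] {N : ℕ} (s : Fin N → H →L[ℂ] H) (v : H) : Submodule ℂ H :=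
  (Submodule.span ℂ {x : H | ∃ K L : List (Fin N), K.length = L.length ∧
      x = (wordOp s K * star (wordOp s L)) v}).topologicalClosure

/-- `Ω` is UHF-cyclic: the closed span of `{s_K s_L^* Ω : |K| = |L|}` is the whole space. -/
def IsUHFCyclic {H : Type*} [NormedAddCommGroup H] [InnerProductSpace ℂ H]
    [CompleteSpace H] {N : ℕ} (s : Fin N → H →L[ℂ] H) (Ω : H) : Prop :=
  UHFSpan s Ω = ⊤

/-- The `P[w]`-condition for an infinite word `w` (0-indexed). -/
def PCond {H : Type*} [NormedAddCommGroup H] [InnerProductSpace ℂ H]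
    [CompleteSpace H] {N : ℕ} (s : Fin N → H →L[ℂ] H) (w : ℕ → Fin N) (Ω : H) : Prop :=
  ∀ n : ℕ, (wordOp s (List.ofFn fun k : Fin n => w k) *
      star (wordOp s (List.ofFn fun k : Fin n => w k))) Ω = Ω

/-!
The P[J]-condition pins down the vector state of `Ω` on the matrix units `s_A s_B^*`
(`|A| = |B| = n`): since `Ω = s_{J_n} s_{J_n}^* Ω` and `s_B^* s_{J_n} = 0` for `B ≠ J_n`, the value
`⟪Ω, s_A s_B^* Ω⟫` is `‖Ω‖²` if `A = B = J_n` and `0` otherwise. Matrix units multiply by a rule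
that depends only on the words, so `⟪s_K s_L^* Ω, s_M s_P^* Ω⟫ = ⟪Ω, s_L s_K^* s_M s_P^* Ω⟫` is
the same for both families. Two total families with equal Gram matrices are carried onto each
other by a unitary, and this unitary intertwines the matrix units because it does so on the
total family `s_M s_P^* Ω`.
-/

open scoped InnerProductSpace

theorem Finsupp.denseRange_linearCombination {R M ι : Type*} [Semiring R] [AddCommMonoid M]
    [Module R M] [TopologicalSpace M] [ContinuousAdd M] [ContinuousConstSMul R M] {v : ι → M}
    (hv : (Submodule.span R (Set.range v)).topologicalClosure = ⊤) :
    DenseRange (Finsupp.linearCombination R v) := by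
  rw [DenseRange, ← LinearMap.coe_range, Finsupp.range_linearCombination]
  exact Submodule.dense_iff_topologicalClosure_eq_top.mpr hv

theorem exists_linearIsometryEquiv_of_inner_eq {𝕜 E F ι : Type*} [RCLike 𝕜]
    [NormedAddCommGroup E] [InnerProductSpace 𝕜 E] [CompleteSpace E]
    [NormedAddCommGroup F] [InnerProductSpace 𝕜 F] [CompleteSpace F]
    {v : ι → E} {w : ι → F} (hv : (Submodule.span 𝕜 (Set.range v)).topologicalClosure = ⊤)
    (hw : (Submodule.span 𝕜 (Set.range w)).topologicalClosure = ⊤)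
    (hvw : ∀ i j, ⟪v i, v j⟫_𝕜 = ⟪w i, w j⟫_𝕜) :
    ∃ U : E ≃ₗᵢ[𝕜] F, ∀ i, U (v i) = w i := by
  have hnorm (f : ι →₀ 𝕜) : ‖Finsupp.linearCombination 𝕜 w (LinearEquiv.refl 𝕜 _ f)‖ =
      ‖Finsupp.linearCombination 𝕜 v f‖ := by
    simp only [LinearEquiv.refl_apply, @norm_eq_sqrt_re_inner 𝕜, Finsupp.linearCombination_apply,
      Finsupp.sum, sum_inner, inner_sum, inner_smul_left, inner_smul_right, hvw]
  have hv' := Finsupp.denseRange_linearCombination hv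
  have hw' := Finsupp.denseRange_linearCombination hw
  refine ⟨(LinearEquiv.refl 𝕜 _).extendOfIsometry _ _ hv' hw' hnorm, fun i => ?_⟩
  simpa using (LinearEquiv.refl 𝕜 _).extendOfIsometry_eq _ _ hv' hw' hnorm (Finsupp.single i 1)

section Cuntz

variable {H H' : Type*} [NormedAddCommGroup H] [InnerProductSpace ℂ H] [CompleteSpace H]
  [NormedAddCommGroup H'] [InnerProductSpace ℂ H'] [CompleteSpace H']
  {N : ℕ} {s : Fin N → H →L[ℂ] H} {s' : Fin N → H' →L[ℂ] H'}

theorem wordOp_append (s : Fin N → H →L[ℂ] H) (K L : List (Fin N)) :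
    wordOp s (K ++ L) = wordOp s K * wordOp s L := by
  induction K with
  | nil => simp [wordOp]
  | cons a K ih => simp [wordOp, ih, mul_assoc]

theorem inner_wordOp_mul_star_apply_left (s : Fin N → H →L[ℂ] H) (K L : List (Fin N))
    (x y : H) :
    ⟪(wordOp s K * star (wordOp s L)) x, y⟫_ℂ = ⟪x, (wordOp s L * star (wordOp s K)) y⟫_ℂ := by
  rw [← ContinuousLinearMap.adjoint_inner_right, ← ContinuousLinearMap.star_eq_adjoint,
    star_mul, star_star]

namespace IsCuntzFamily

theorem star_mul_self (hs : IsCuntzFamily s) (i : Fin N) : star (s i) * s i = 1 := by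
  simpa using hs.1 i i

theorem star_mul_of_ne (hs : IsCuntzFamily s) {i j : Fin N} (hij : i ≠ j) :
    star (s i) * s j = 0 := by
  simpa [hij] using hs.1 i j

theorem star_wordOp_mul_wordOp_append (hs : IsCuntzFamily s) (L R : List (Fin N)) :
    star (wordOp s L) * wordOp s (L ++ R) = wordOp s R := by
  induction L with
  | nil => simp [wordOp]
  | cons a L ih =>
    calc star (wordOp s (a :: L)) * wordOp s (a :: L ++ R)
        = star (wordOp s L) * (star (s a) * s a) * wordOp s (L ++ R) := by
          simp only [wordOp, List.cons_append, star_mul, mul_assoc]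
      _ = wordOp s R := by rw [hs.star_mul_self, mul_one, ih]

theorem star_wordOp_mul_wordOp_eq_zero (hs : IsCuntzFamily s) :
    ∀ {L M : List (Fin N)}, ¬ L <+: M → ¬ M <+: L → star (wordOp s L) * wordOp s M = 0
  | [], _, hLM, _ => absurd List.nil_prefix hLM
  | _, [], _, hML => absurd List.nil_prefix hML
  | a :: L, b :: M, hLM, hML => by
    have hsplit : star (wordOp s (a :: L)) * wordOp s (b :: M)
        = star (wordOp s L) * (star (s a) * s b) * wordOp s M := by
      simp only [wordOp, star_mul, mul_assoc]
    rw [hsplit]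
    by_cases hab : a = b
    · subst hab
      rw [hs.star_mul_self, mul_one]
      exact hs.star_wordOp_mul_wordOp_eq_zero (fun h => hLM (List.cons_prefix_cons.mpr ⟨rfl, h⟩))
        (fun h => hML (List.cons_prefix_cons.mpr ⟨rfl, h⟩))
    · rw [hs.star_mul_of_ne hab, mul_zero, zero_mul]

theorem star_wordOp_mul_wordOp_of_length_eq (hs : IsCuntzFamily s) {L M : List (Fin N)}
    (h : L.length = M.length) :
    star (wordOp s L) * wordOp s M = if L = M then 1 else 0 := by
  split_ifs with hLM
  · subst hLM
    simpa [wordOp] using hs.star_wordOp_mul_wordOp_append L []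
  · exact hs.star_wordOp_mul_wordOp_eq_zero (fun hp => hLM (hp.eq_of_length h))
      (fun hp => hLM (hp.eq_of_length h.symm).symm)

theorem wordOp_mul_star_mul_wordOp_mul_star (hs : IsCuntzFamily s) (K L M P : List (Fin N)) :
    (wordOp s K * star (wordOp s L)) * (wordOp s M * star (wordOp s P)) =
      if L <+: M then wordOp s (K ++ M.drop L.length) * star (wordOp s P)
      else if M <+: L then wordOp s K * star (wordOp s (P ++ L.drop M.length))
      else 0 := by
  have hmid : (wordOp s K * star (wordOp s L)) * (wordOp s M * star (wordOp s P))
      = wordOp s K * (star (wordOp s L) * wordOp s M) * star (wordOp s P) := by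
    simp only [mul_assoc]
  rw [hmid]
  split_ifs with hLM hML
  · obtain ⟨R, rfl⟩ := hLM
    rw [hs.star_wordOp_mul_wordOp_append, List.drop_left, wordOp_append]
  · obtain ⟨R, rfl⟩ := hML
    rw [← star_star (star (wordOp s (M ++ R)) * wordOp s M), star_mul, star_star,
      hs.star_wordOp_mul_wordOp_append, List.drop_left, wordOp_append, star_mul, mul_assoc]
  · rw [hs.star_wordOp_mul_wordOp_eq_zero hLM hML, mul_zero, zero_mul]

end IsCuntzFamily

def prefixWord (J : ℕ → Fin N) (n : ℕ) : List (Fin N) := List.ofFn fun k : Fin n => J k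

namespace PCond

variable {J : ℕ → Fin N} {Ω : H} {Ω' : H'}

theorem wordOp_prefixWord_mul_star_apply (hP : PCond s J Ω) (n : ℕ) :
    (wordOp s (prefixWord J n) * star (wordOp s (prefixWord J n))) Ω = Ω :=
  hP n

theorem star_wordOp_apply_eq_zero (hs : IsCuntzFamily s) (hP : PCond s J Ω)
    {L : List (Fin N)} (hL : L ≠ prefixWord J L.length) : star (wordOp s L) Ω = 0 := by
  rw [← hP.wordOp_prefixWord_mul_star_apply L.length, ← mul_apply_eq_comp, ← mul_assoc,
    hs.star_wordOp_mul_wordOp_of_length_eq (by simp [prefixWord]), if_neg hL, zero_mul,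
    zero_apply]

theorem inner_wordOp_mul_star_apply (hs : IsCuntzFamily s) (hP : PCond s J Ω)
    {A B : List (Fin N)} (hAB : A.length = B.length) :
    ⟪Ω, (wordOp s A * star (wordOp s B)) Ω⟫_ℂ =
      if A = prefixWord J A.length ∧ B = prefixWord J B.length then (‖Ω‖ ^ 2 : ℂ) else 0 := by
  rw [mul_apply_eq_comp, ← ContinuousLinearMap.adjoint_inner_left,
    ← ContinuousLinearMap.star_eq_adjoint]
  split_ifs with h
  · obtain ⟨hA, hB⟩ := h
    obtain rfl : A = B := by rw [hA, hB, hAB]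
    rw [ContinuousLinearMap.star_eq_adjoint, ContinuousLinearMap.adjoint_inner_right,
      ← ContinuousLinearMap.star_eq_adjoint, ← mul_apply_eq_comp, hA,
      hP.wordOp_prefixWord_mul_star_apply, inner_self_eq_norm_sq_to_K]
    rfl
  · rcases not_and_or.mp h with hA | hB
    · rw [hP.star_wordOp_apply_eq_zero hs hA, inner_zero_left]
    · rw [hP.star_wordOp_apply_eq_zero hs hB, inner_zero_right]

theorem inner_wordOp_mul_star_apply_eq (hs : IsCuntzFamily s) (hs' : IsCuntzFamily s')
    (hP : PCond s J Ω) (hP' : PCond s' J Ω') (hΩ : ‖Ω‖ = ‖Ω'‖) {K L M P : List (Fin N)}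
    (hKL : K.length = L.length) (hMP : M.length = P.length) :
    ⟪(wordOp s K * star (wordOp s L)) Ω, (wordOp s M * star (wordOp s P)) Ω⟫_ℂ =
      ⟪(wordOp s' K * star (wordOp s' L)) Ω', (wordOp s' M * star (wordOp s' P)) Ω'⟫_ℂ := by
  rw [inner_wordOp_mul_star_apply_left, inner_wordOp_mul_star_apply_left, ← mul_apply_eq_comp,
    ← mul_apply_eq_comp, hs.wordOp_mul_star_mul_wordOp_mul_star,
    hs'.wordOp_mul_star_mul_wordOp_mul_star]
  split_ifs with hKM hMK
  · have := hKM.length_le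
    rw [hP.inner_wordOp_mul_star_apply hs, hP'.inner_wordOp_mul_star_apply hs', hΩ] <;>
      simp only [List.length_append, List.length_drop] <;> omega
  · have := hMK.length_le
    rw [hP.inner_wordOp_mul_star_apply hs, hP'.inner_wordOp_mul_star_apply hs', hΩ] <;>
      simp only [List.length_append, List.length_drop] <;> omega
  · simp

end PCond

namespace IsUHFCyclic

variable {Ω : H} {Ω' : H'}

theorem topologicalClosure_span_range (hcyc : IsUHFCyclic s Ω) :
    (Submodule.span ℂ (Set.range fun p : {p : List (Fin N) × List (Fin N) //
      p.1.length = p.2.length} => (wordOp s p.1.1 * star (wordOp s p.1.2)) Ω)).topologicalClosure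
      = ⊤ := by
  rw [IsUHFCyclic, UHFSpan] at hcyc
  convert hcyc using 4
  ext x
  constructor
  · rintro ⟨⟨⟨K, L⟩, hKL⟩, rfl⟩
    exact ⟨K, L, hKL, rfl⟩
  · rintro ⟨K, L, hKL, rfl⟩
    exact ⟨⟨(K, L), hKL⟩, rfl⟩

theorem comp_wordOp_mul_star (hs : IsCuntzFamily s) (hs' : IsCuntzFamily s')
    (hcyc : IsUHFCyclic s Ω) {U : H →L[ℂ] H'}
    (hU : ∀ M P : List (Fin N), M.length = P.length →
      U ((wordOp s M * star (wordOp s P)) Ω) = (wordOp s' M * star (wordOp s' P)) Ω')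
    {K L : List (Fin N)} (hKL : K.length = L.length) :
    U ∘L (wordOp s K * star (wordOp s L)) = (wordOp s' K * star (wordOp s' L)) ∘L U := by
  refine ContinuousLinearMap.ext_on (Submodule.dense_iff_topologicalClosure_eq_top.mpr hcyc) ?_
  rintro _ ⟨M, P, hMP, rfl⟩
  rw [ContinuousLinearMap.comp_apply, ContinuousLinearMap.comp_apply, hU M P hMP,
    ← mul_apply_eq_comp, ← mul_apply_eq_comp, hs.wordOp_mul_star_mul_wordOp_mul_star,
    hs'.wordOp_mul_star_mul_wordOp_mul_star]
  split_ifs with hLM hML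
  · have := hLM.length_le
    exact hU _ _ (by simp only [List.length_append, List.length_drop]; omega)
  · have := hML.length_le
    exact hU _ _ (by simp only [List.length_append, List.length_drop]; omega)
  · simp

end IsUHFCyclic

end Cuntz

theorem PJ_unique_up_to_unitary
    {H H' : Type*} [NormedAddCommGroup H] [InnerProductSpace ℂ H] [CompleteSpace H]
    [NormedAddCommGroup H'] [InnerProductSpace ℂ H'] [CompleteSpace H']
    {N : ℕ} (s : Fin N → H →L[ℂ] H) (s' : Fin N → H' →L[ℂ] H')
    (hs : IsCuntzFamily s) (hs' : IsCuntzFamily s')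
    (J : ℕ → Fin N) (Ω : H) (Ω' : H') (hΩ : ‖Ω‖ = 1) (hΩ' : ‖Ω'‖ = 1)
    (hcyc : IsUHFCyclic s Ω) (hcyc' : IsUHFCyclic s' Ω')
    (hP : PCond s J Ω) (hP' : PCond s' J Ω') :
    ∃ U : H ≃ₗᵢ[ℂ] H', U Ω = Ω' ∧
      ∀ K L : List (Fin N), K.length = L.length →
        ∀ x : H, U ((wordOp s K * star (wordOp s L)) x)
          = (wordOp s' K * star (wordOp s' L)) (U x) := by
  obtain ⟨U, hU⟩ := exists_linearIsometryEquiv_of_inner_eq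
    hcyc.topologicalClosure_span_range hcyc'.topologicalClosure_span_range
    fun p q => hP.inner_wordOp_mul_star_apply_eq hs hs' hP' (hΩ.trans hΩ'.symm) p.2 q.2
  have hU' (M P : List (Fin N)) (hMP : M.length = P.length) :
      U ((wordOp s M * star (wordOp s P)) Ω) = (wordOp s' M * star (wordOp s' P)) Ω' :=
    hU ⟨(M, P), hMP⟩
  refine ⟨U, by simpa [wordOp] using hU' [] [] rfl, fun K L hKL x => ?_⟩
  exact DFunLike.congr_fun
    (hcyc.comp_wordOp_mul_star (U := (U : H →L[ℂ] H')) hs hs' hU' hKL) x
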